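/- arXiv:2010.08960 — 2 statements merged into one kernel-verified Lean document; each statement's English description precedes it below -/
import Mathlib

section
/- Let C be a k-graph with no sources and let XC be a finitely generated essential right ideal of C, with X finite. Put m = the componentwise supremum of {d(x) : x ∈ X} in ℕ^k. Then every morphism of C of degree m lies in XC; that is, C_mC ⊆ XC. In particular, every finitely generated essential right ideal contains a right ideal generated by a maximal code. -/
open CategoryTheory

universe u v

namespace KGraphPaper

/-- The set of all morphisms of a category, encoded as triples
`⟨source, target, hom⟩`.  The "source" of `m` is `m.1` and the "target" is `m.2.1`. -/
abbrev Mor (C : Type u) [Category.{v} C] : Type (max u v) := Σ (x y : C), x ⟶ y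

variable {C : Type u} [Category.{v} C]

/-- `Comp a b c` means: the composite `ab` is defined (the source of `a` equals
the target of `b`) and equals `c`. -/
def Comp (a b c : Mor C) : Prop :=
  ∃ (x y z : C) (f : y ⟶ z) (g : x ⟶ y),
    a = ⟨y, z, f⟩ ∧ b = ⟨x, y, g⟩ ∧ c = ⟨x, z, g ≫ f⟩

/-- The principal right ideal `aC = {ax : x a morphism with ax defined}`. -/
def princ (a : Mor C) : Set (Mor C) := {c | ∃ b, Comp a b c}

/-- `XC = ⋃_{x ∈ X} xC`. -/
def idealOf (X : Set (Mor C)) : Set (Mor C) := ⋃ x ∈ X, princ x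

/-- A right ideal: closed under composition on the right. -/
def IsRightIdeal (R : Set (Mor C)) : Prop :=
  ∀ r ∈ R, ∀ s c : Mor C, Comp r s c → c ∈ R

/-- A finitely generated right ideal: `R = XC` with `X` finite. -/
def FG (R : Set (Mor C)) : Prop := ∃ X : Set (Mor C), X.Finite ∧ R = idealOf X

/-- `m` is an identity morphism. -/
def IsId (m : Mor C) : Prop := ∃ x : C, m = ⟨x, x, 𝟙 x⟩

/-- `C` has only finitely many identities. -/
def FinIds (C : Type u) [Category.{v} C] : Prop := {m : Mor C | IsId m}.Finite

/-- A right ideal `R` is essential if `R ∩ aC ≠ ∅` for every morphism `a`. -/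
def Essential (R : Set (Mor C)) : Prop := ∀ a : Mor C, (R ∩ princ a).Nonempty

/-- `a` and `b` are dependent if `aC ∩ bC ≠ ∅`. -/
def Dependent (a b : Mor C) : Prop := (princ a ∩ princ b).Nonempty

/-- `X` is large in `C`: every morphism is dependent on some element of `X`. -/
def LargeIn (X : Set (Mor C)) : Prop := ∀ a : Mor C, ∃ x ∈ X, Dependent a x

/-- `C` is cancellative: `ab = ab' → b = b'` and `ba = b'a → b = b'`. -/
def Cancellative (C : Type u) [Category.{v} C] : Prop :=
  (∀ a b b' c : Mor C, Comp a b c → Comp a b' c → b = b') ∧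
  (∀ a b b' c : Mor C, Comp b a c → Comp b' a c → b = b')

/-- `C` is conical: the only invertible morphisms are the identities. -/
def Conical (C : Type u) [Category.{v} C] : Prop :=
  ∀ a b : Mor C, (∃ c, Comp a b c ∧ IsId c) → (∃ c, Comp b a c ∧ IsId c) → IsId a

/-- `C` is finitely aligned: each `aC ∩ bC` is a finitely generated right ideal. -/
def FinitelyAligned (C : Type u) [Category.{v} C] : Prop :=
  ∀ a b : Mor C, FG (princ a ∩ princ b)

/-- `θ` is a morphism of right ideals on `R`: whenever `rs` is defined with `r ∈ R`,
`θ(r)s` is defined and `θ(rs) = θ(r)s`. -/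
def RIMorOn (R : Set (Mor C)) (θ : Mor C → Mor C) : Prop :=
  ∀ r ∈ R, ∀ s c : Mor C, Comp r s c → Comp (θ r) s (θ c)

/-- A code: a finite set of pairwise independent morphisms. -/
def Code (U : Set (Mor C)) : Prop :=
  U.Finite ∧ ∀ a ∈ U, ∀ b ∈ U, a ≠ b → ¬ Dependent a b

/-- A maximal code: a code which is large in `C`. -/
def MaximalCode (U : Set (Mor C)) : Prop := Code U ∧ LargeIn U

/-- `C` is strongly finitely aligned: each `aC ∩ bC` is empty or generated by a code. -/
def StronglyFinitelyAligned (C : Type u) [Category.{v} C] : Prop :=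
  ∀ a b : Mor C, princ a ∩ princ b = ∅ ∨
    ∃ S : Set (Mor C), Code S ∧ princ a ∩ princ b = idealOf S

/-- `xy⁻¹ ≤ uv⁻¹` for basic morphisms: `yC ⊆ vC` and `uv⁻¹` agrees with `xy⁻¹` on `yC`. -/
def basicLE (x y u v : Mor C) : Prop :=
  princ y ⊆ princ v ∧
  ∀ z s t w w' : Mor C, Comp y s z → Comp x s w → Comp v t z → Comp u t w' → w = w'

end KGraphPaper

namespace KGraphPaper

variable {C : Type u} [Category.{v} C]

/-- `d` makes the countable category `C` into a `k`-graph: the degree map is a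
functor to `ℕ^k` satisfying the unique factorisation property. -/
def IsKGraph {k : ℕ} (d : Mor C → (Fin k → ℕ)) : Prop :=
  Countable (Mor C) ∧
  (∀ m : Mor C, IsId m → d m = 0) ∧
  (∀ a b c : Mor C, Comp a b c → d c = d a + d b) ∧
  (∀ (a : Mor C) (m n : Fin k → ℕ), d a = m + n →
    ∃ a₁ a₂ : Mor C, (Comp a₁ a₂ a ∧ d a₁ = m ∧ d a₂ = n) ∧
      ∀ b₁ b₂ : Mor C, Comp b₁ b₂ a → d b₁ = m → d b₂ = n → b₁ = a₁ ∧ b₂ = a₂)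

/-- `C` has no sources: every identity receives a morphism of every degree. -/
def NoSources {k : ℕ} (d : Mor C → (Fin k → ℕ)) : Prop :=
  ∀ (e : C) (m : Fin k → ℕ), ∃ x : Mor C, x.2.1 = e ∧ d x = m

/-- `C` is row finite: finitely many morphisms with a given target and degree. -/
def RowFinite {k : ℕ} (d : Mor C → (Fin k → ℕ)) : Prop :=
  ∀ (e : C) (m : Fin k → ℕ), {x : Mor C | x.2.1 = e ∧ d x = m}.Finite

end KGraphPaper

open KGraphPaper

namespace KGraphPaper

variable {C : Type u} [Category.{v} C]

lemma comp_assoc' {a b ab c abc : Mor C} (h1 : Comp a b ab) (h2 : Comp ab c abc) :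
    ∃ bc, Comp b c bc ∧ Comp a bc abc := by
  obtain ⟨x, y, z, f, g, rfl, rfl, rfl⟩ := h1
  obtain ⟨x', y', z', f', g', heq, rfl, rfl⟩ := h2
  obtain ⟨rfl, h⟩ := Sigma.mk.inj_iff.mp heq
  obtain ⟨rfl, h⟩ := Sigma.mk.inj_iff.mp (eq_of_heq h)
  have h := eq_of_heq h; subst h
  refine ⟨⟨x', y, g' ≫ g⟩, ⟨x', x, y, g, g', rfl, rfl, rfl⟩,
    ⟨x', y, z, f, g' ≫ g, rfl, rfl, ?_⟩⟩
  simp [Category.assoc]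

lemma mem_idealOf_iff {X : Set (Mor C)} {c : Mor C} :
    c ∈ idealOf X ↔ ∃ x ∈ X, ∃ t, Comp x t c := by
  simp only [idealOf, Set.mem_iUnion]
  exact ⟨fun ⟨x, hx, h⟩ => ⟨x, hx, h⟩, fun ⟨x, hx, h⟩ => ⟨x, hx, h⟩⟩

end KGraphPaper

/-- in a `k`-graph with no sources, if `XC` is a finitely generated
essential right ideal and `m` is the componentwise supremum of `{d(x) : x ∈ X}`,
then every morphism of degree `m` lies in `XC`; that is, `C_m C ⊆ XC`. -/
theorem stmt_15 (C : Type u) [Category.{v} C] (k : ℕ) (d : Mor C → (Fin k → ℕ))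
    (hK : IsKGraph d) (hNS : NoSources d)
    (X : Set (Mor C)) (hX : X.Finite) (hEss : Essential (idealOf X))
    (m : Fin k → ℕ)
    (hub : ∀ x ∈ X, d x ≤ m)
    (hlub : ∀ m' : Fin k → ℕ, (∀ x ∈ X, d x ≤ m') → m ≤ m') :
    (∀ y : Mor C, d y = m → y ∈ idealOf X) ∧
    idealOf {y : Mor C | d y = m} ⊆ idealOf X := by
  have key : ∀ y : Mor C, d y = m → y ∈ idealOf X := by
    intro y hy
    obtain ⟨c, hcX, b, hcomp⟩ := hEss y
    obtain ⟨x, hxX, t, hxt⟩ := mem_idealOf_iff.mp hcX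
    -- factor y at degree d x
    have hdx : d y = d x + (m - d x) := by
      rw [hy]; funext i
      have hle : d x i ≤ m i := hub x hxX i
      simp only [Pi.add_apply, Pi.sub_apply]; omega
    obtain ⟨y₁, y₂, ⟨hcy, hd1, hd2⟩, huniq⟩ := hK.2.2.2 y (d x) (m - d x) hdx
    -- associativity: c = y₁ (y₂ b)
    obtain ⟨bc, hbc, hcomp'⟩ := comp_assoc' hcy hcomp
    -- uniqueness of factorization of c at degree d x
    have hdc : d c = d x + (d t) := hK.2.2.1 x t c hxt
    have hdbc : d bc = d t := by
      have h1 : d c = d y + d b := hK.2.2.1 y b c hcomp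
      have h2 : d bc = d y₂ + d b := hK.2.2.1 y₂ b bc hbc
      funext i
      have e1 := congrFun hdc i
      have e2 := congrFun h1 i
      have e3 := congrFun h2 i
      have e4 := congrFun hd2 i
      have e5 := congrFun hy i
      have hle : d x i ≤ m i := hub x hxX i
      simp only [Pi.add_apply, Pi.sub_apply] at e1 e2 e3 e4 e5 ⊢
      omega
    obtain ⟨c₁, c₂, _, huc⟩ := hK.2.2.2 c (d x) (d t) hdc
    have e1 := huc x t hxt rfl rfl
    have e2 := huc y₁ bc hcomp' hd1 hdbc
    have hxy : y₁ = x := e2.1.trans e1.1.symm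
    exact mem_idealOf_iff.mpr ⟨x, hxX, y₂, hxy ▸ hcy⟩
  refine ⟨key, ?_⟩
  intro z hz
  obtain ⟨y, hy, s, hys⟩ := mem_idealOf_iff.mp hz
  obtain ⟨x, hxX, r, hxr⟩ := mem_idealOf_iff.mp (key y hy)
  obtain ⟨rs, _, hcomp'⟩ := comp_assoc' hxr hys
  exact mem_idealOf_iff.mpr ⟨x, hxX, rs, hcomp'⟩
end

section
/- Let C be a k-graph and let a, b be morphisms of C. Then aC ∩ bC = ⋃ { xC : x ∈ aC ∩ bC and d(x) = d(a) ⊔ d(b) }, where d(a) ⊔ d(b) is the componentwise maximum in ℕ^k. -/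
open CategoryTheory

universe u v

namespace KGraphPaper

variable {C : Type u} [Category.{v} C]

/-- Associativity helper: if `p = xy` and `q = pz`, then `q = x(yz)`. -/
lemma comp_assoc'_s17 {x y p z q : Mor C} (h1 : Comp x y p) (h2 : Comp p z q) :
    ∃ w, Comp y z w ∧ Comp x w q := by
  obtain ⟨X, Y, Z, f, g, rfl, rfl, rfl⟩ := h1
  obtain ⟨X', Y', Z', f', g', hp, rfl, rfl⟩ := h2
  injection hp with h1 h2
  subst h1
  injection eq_of_heq h2 with h3 h4
  subst h3
  obtain rfl := (eq_of_heq h4).symm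
  refine ⟨⟨X', Y, g' ≫ g⟩, ⟨X', X, Y, g, g', rfl, rfl, rfl⟩,
    ⟨X', Y, Z, f, g' ≫ g, rfl, rfl, ?_⟩⟩
  simp [Category.assoc]

/-- Key step: if `c = xy`, `c = as` and `d a ≤ d x`, then `x ∈ aC`. -/
lemma mem_princ_of_le {k : ℕ} {d : Mor C → (Fin k → ℕ)} (hK : IsKGraph d)
    {a s c x y : Mor C} (hxy : Comp x y c) (has : Comp a s c)
    (hle : d a ≤ d x) : x ∈ princ a := by
  have hx : d x = d a + (d x - d a) := by
    funext i
    exact (Nat.add_sub_cancel' (hle i)).symm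
  obtain ⟨x1, x2, ⟨hcomp, hd1, hd2⟩, _⟩ := hK.2.2.2 x (d a) (d x - d a) hx
  obtain ⟨w, hw1, hw2⟩ := comp_assoc'_s17 hcomp hxy
  have hdc : d c = d a + d s := hK.2.2.1 a s c has
  have hdc2 : d c = d x1 + d w := hK.2.2.1 x1 w c hw2
  have hds : d w = d s := by
    rw [hd1] at hdc2
    exact (add_left_cancel (hdc.symm.trans hdc2)).symm
  obtain ⟨a1, a2, _, huniq⟩ := hK.2.2.2 c (d a) (d s) hdc
  have e1 := huniq a s has rfl rfl
  have e2 := huniq x1 w hw2 hd1 hds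
  obtain rfl : a = x1 := e1.1.trans e2.1.symm
  exact ⟨x2, hcomp⟩

end KGraphPaper

open KGraphPaper

/-- in a `k`-graph,
`aC ∩ bC = ⋃ { xC : x ∈ aC ∩ bC, d(x) = d(a) ⊔ d(b) }`. -/
theorem stmt_17 (C : Type u) [Category.{v} C] (k : ℕ) (d : Mor C → (Fin k → ℕ))
    (hK : IsKGraph d) (a b : Mor C) :
    princ a ∩ princ b =
      ⋃ x ∈ {x : Mor C | x ∈ princ a ∩ princ b ∧ d x = d a ⊔ d b}, princ x := by
  ext c
  simp only [Set.mem_inter_iff, Set.mem_iUnion, Set.mem_setOf_eq]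
  constructor
  · rintro ⟨⟨s, has⟩, ⟨t, hbt⟩⟩
    have hdc : d c = d a + d s := hK.2.2.1 a s c has
    have hdc' : d c = d b + d t := hK.2.2.1 b t c hbt
    have hle : d a ⊔ d b ≤ d c := by
      intro i
      have h1 : d a i ≤ d c i := by rw [hdc]; exact Nat.le_add_right _ _
      have h2 : d b i ≤ d c i := by rw [hdc']; exact Nat.le_add_right _ _
      exact sup_le h1 h2
    have hc : d c = (d a ⊔ d b) + (d c - (d a ⊔ d b)) := by
      funext i
      exact (Nat.add_sub_cancel' (hle i)).symm
    obtain ⟨x, y, ⟨hcomp, hdx, _⟩, _⟩ := hK.2.2.2 c (d a ⊔ d b) _ hc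
    refine ⟨x, ⟨⟨?_, ?_⟩, hdx⟩, ⟨y, hcomp⟩⟩
    · exact mem_princ_of_le hK hcomp has (hdx ▸ le_sup_left)
    · exact mem_princ_of_le hK hcomp hbt (hdx ▸ le_sup_right)
  · rintro ⟨x, ⟨⟨⟨s, has⟩, ⟨t, hbt⟩⟩, _⟩, ⟨y, hxy⟩⟩
    constructor
    · obtain ⟨w, _, hw⟩ := comp_assoc'_s17 has hxy
      exact ⟨w, hw⟩
    · obtain ⟨w, _, hw⟩ := comp_assoc'_s17 hbt hxy
      exact ⟨w, hw⟩
end
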